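/- arXiv:2506.04967 — 3 statements merged into one kernel-verified Lean document; each statement's English description precedes it below -/
import Mathlib

section
/- Let $\gamma : (0,\infty) \to (0,\infty)$ satisfy $\gamma(\theta a) < \theta^2 \gamma(a)$ for all $a > 0$ and all $\theta > 1$. Then for any $k \ge 2$ and any $a, a_1, \ldots, a_k > 0$ with $a^2 = a_1^2 + \cdots + a_k^2$, one has $\gamma(a) < \gamma(a_1) + \cdots + \gamma(a_k)$. -/
/-- Strict subadditivity of the mountain pass level. -/
theorem stmt12 (γ : ℝ → ℝ) (hpos : ∀ a : ℝ, 0 < a → 0 < γ a)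
    (hsub : ∀ a : ℝ, 0 < a → ∀ θ : ℝ, 1 < θ → γ (θ * a) < θ ^ 2 * γ a)
    (k : ℕ) (hk : 2 ≤ k) (a : ℝ) (as : Fin k → ℝ)
    (ha : 0 < a) (has : ∀ i, 0 < as i)
    (hsum : a ^ 2 = ∑ i, (as i) ^ 2) :
    γ a < ∑ i, γ (as i) := by
  have ha2 : (0:ℝ) < a ^ 2 := by positivity
  have key : ∀ i, (as i) ^ 2 / a ^ 2 * γ a < γ (as i) := by
    intro i
    -- find another index
    obtain ⟨j, hj⟩ : ∃ j : Fin k, j ≠ i := by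
      haveI : Nontrivial (Fin k) := Fin.nontrivial_iff_two_le.2 hk
      exact exists_ne i
    have hlt : as i < a := by
      have hsq : (as i) ^ 2 < a ^ 2 := by
        rw [hsum]
        exact Finset.single_lt_sum (f := fun j => (as j)^2) hj (Finset.mem_univ i)
          (Finset.mem_univ j) (pow_pos (has j) 2) (fun m _ _ => (pow_pos (has m) 2).le)
      exact lt_of_pow_lt_pow_left₀ 2 ha.le hsq
    have hθ : 1 < a / as i := (one_lt_div (has i)).2 hlt
    have h := hsub (as i) (has i) (a / as i) hθ
    rw [div_mul_cancel₀ _ (has i).ne'] at h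
    have hγ : γ a < a ^ 2 / (as i) ^ 2 * γ (as i) := by
      rwa [div_pow] at h
    rw [div_mul_eq_mul_div, div_lt_iff₀ ha2]
    calc (as i) ^ 2 * γ a < (as i) ^ 2 * (a ^ 2 / (as i) ^ 2 * γ (as i)) := by
          exact (mul_lt_mul_iff_right₀ (pow_pos (has i) 2)).2 hγ
      _ = γ (as i) * a ^ 2 := by field_simp [(has i).ne']
  have hγa : γ a = ∑ i, (as i) ^ 2 / a ^ 2 * γ a := by
    rw [← Finset.sum_mul, ← Finset.sum_div, ← hsum, div_self ha2.ne', one_mul]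
  rw [hγa]
  refine Finset.sum_lt_sum_of_nonempty ?_ (fun i _ => key i)
  exact Finset.univ_nonempty_iff.2 ⟨⟨0, by omega⟩⟩
end

section
/- Let $h : (0,\infty)\times(0,\infty) \to \mathbb{R}$, $h(a,\rho) = \frac{1}{2} - \frac{\mu}{q}C_q \rho^{q\beta_q-2}a^{(1-\beta_q)q} - \frac{1}{p}C_p\rho^{p\beta_p-2}a^{(1-\beta_p)p}$ with $2 < q < 10/3 < p < 6$, $\beta_s = \frac32 - \frac3s$, $\mu, C_q, C_p > 0$. Suppose $h(a_1,\rho_1) \ge 0$ for some $a_1, \rho_1 > 0$. Then for any $a_2 \in (0, a_1]$ and any $\rho_2 \in [\frac{a_2}{a_1}\rho_1, \rho_1]$, one has $h(a_2, \rho_2) \ge 0$. -/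
open Real

/-- Comparison for the term with negative `ρ`-exponent. -/
lemma stmt15_aux1 (ρ1 ρ2 a1 a2 e f : ℝ) (hρ1 : 0 < ρ1) (ha1 : 0 < a1)
    (ha2 : 0 < a2) (ha : a2 ≤ a1) (hlo : a2 / a1 * ρ1 ≤ ρ2)
    (he : e ≤ 0) (hef : 0 ≤ e + f) :
    ρ2 ^ e * a2 ^ f ≤ ρ1 ^ e * a1 ^ f := by
  have hpos : (0:ℝ) < a2 / a1 * ρ1 := by positivity
  have hρ2 : 0 < ρ2 := lt_of_lt_of_le hpos hlo
  have step1 : ρ2 ^ e * a2 ^ f ≤ (a2 / a1 * ρ1) ^ e * a2 ^ f := by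
    apply mul_le_mul_of_nonneg_right
    · exact Real.rpow_le_rpow_of_nonpos hpos hlo he
    · exact Real.rpow_nonneg ha2.le f
  have key : (a2 / a1) ^ e * a2 ^ f ≤ a1 ^ f := by
    have h1 : (a2 / a1) ^ e * a2 ^ f = a2 ^ (e + f) / a1 ^ e := by
      rw [Real.div_rpow ha2.le ha1.le, Real.rpow_add ha2]
      ring
    have h2 : a2 ^ (e + f) ≤ a1 ^ (e + f) :=
      Real.rpow_le_rpow ha2.le ha hef
    have h3 : a1 ^ f = a1 ^ (e + f) / a1 ^ e := by
      rw [← Real.rpow_sub ha1]; ring_nf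
    rw [h1, h3]
    apply div_le_div_of_nonneg_right h2
    exact Real.rpow_nonneg ha1.le e
  calc ρ2 ^ e * a2 ^ f ≤ (a2 / a1 * ρ1) ^ e * a2 ^ f := step1
    _ = ρ1 ^ e * ((a2 / a1) ^ e * a2 ^ f) := by
        rw [Real.mul_rpow (by positivity) hρ1.le]; ring
    _ ≤ ρ1 ^ e * a1 ^ f := by
        apply mul_le_mul_of_nonneg_left key (Real.rpow_nonneg hρ1.le e)

/-- Monotonicity/sign propagation for `h(a,ρ)` (Lemma 5.2). -/
theorem stmt15 (q p μ Cq Cp : ℝ) (hq1 : 2 < q) (hq2 : q < 10/3)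
    (hp1 : 10/3 < p) (hp2 : p < 6) (hμ : 0 < μ) (hCq : 0 < Cq) (hCp : 0 < Cp)
    (βq βp : ℝ) (hβq : βq = 3/2 - 3/q) (hβp : βp = 3/2 - 3/p)
    (h : ℝ → ℝ → ℝ)
    (hh : ∀ a ρ : ℝ, h a ρ = 1/2 - μ/q * Cq * ρ ^ (q * βq - 2) * a ^ ((1 - βq) * q)
        - 1/p * Cp * ρ ^ (p * βp - 2) * a ^ ((1 - βp) * p))
    (a1 ρ1 : ℝ) (ha1 : 0 < a1) (hρ1 : 0 < ρ1) (h1 : 0 ≤ h a1 ρ1) :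
    ∀ a2 : ℝ, 0 < a2 → a2 ≤ a1 →
      ∀ ρ2 : ℝ, a2 / a1 * ρ1 ≤ ρ2 → ρ2 ≤ ρ1 → 0 ≤ h a2 ρ2 := by
  intro a2 ha2 ha ρ2 hlo hhi
  have hq0 : (0:ℝ) < q := by linarith
  have hp0 : (0:ℝ) < p := by linarith
  have hρ2 : 0 < ρ2 := lt_of_lt_of_le (by positivity) hlo
  have hqβ : q * βq = 3 * q / 2 - 3 := by rw [hβq]; field_simp
  have hpβ : p * βp = 3 * p / 2 - 3 := by rw [hβp]; field_simp
  have hfq : (1 - βq) * q = 3 - q / 2 := by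
    have : (1 - βq) * q = q - q * βq := by ring
    rw [this, hqβ]; ring
  have hfp : (1 - βp) * p = 3 - p / 2 := by
    have : (1 - βp) * p = p - p * βp := by ring
    rw [this, hpβ]; ring
  have heq : q * βq - 2 ≤ 0 := by rw [hqβ]; linarith
  have hefq : 0 ≤ (q * βq - 2) + (1 - βq) * q := by rw [hqβ, hfq]; linarith
  have hep : 0 ≤ p * βp - 2 := by rw [hpβ]; linarith
  have hfp' : 0 ≤ (1 - βp) * p := by rw [hfp]; linarith
  have T1 : ρ2 ^ (q * βq - 2) * a2 ^ ((1 - βq) * q)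
      ≤ ρ1 ^ (q * βq - 2) * a1 ^ ((1 - βq) * q) :=
    stmt15_aux1 ρ1 ρ2 a1 a2 _ _ hρ1 ha1 ha2 ha hlo heq hefq
  have T2 : ρ2 ^ (p * βp - 2) * a2 ^ ((1 - βp) * p)
      ≤ ρ1 ^ (p * βp - 2) * a1 ^ ((1 - βp) * p) := by
    apply mul_le_mul (Real.rpow_le_rpow hρ2.le hhi hep)
      (Real.rpow_le_rpow ha2.le ha hfp') (Real.rpow_nonneg ha2.le _)
      (Real.rpow_nonneg hρ1.le _)
  have c1 : 0 ≤ μ / q * Cq := by positivity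
  have c2 : 0 ≤ 1 / p * Cp := by positivity
  rw [hh] at h1 ⊢
  nlinarith [mul_le_mul_of_nonneg_left T1 c1, mul_le_mul_of_nonneg_left T2 c2]
end

section
/- Let $m : (0,\infty) \to (-\infty, 0)$ satisfy $m(\theta b) \le \theta^2 m(b)$ for all $b > 0$ and $\theta > 1$. Then for all $a > 0$ and $b \in (0, a)$, $m(a) \le m(b) + m(\sqrt{a^2 - b^2})$. Moreover, if additionally $m(\theta b') < \theta^2 m(b')$ for some $b' \in \{b, \sqrt{a^2-b^2}\}$ and the corresponding $\theta = a/b'$, then $m(a) < m(b) + m(\sqrt{a^2-b^2})$. -/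
/-- Weak subadditivity of the local minimization level, with strictness
when the scaling inequality is strict. -/
theorem stmt17 (m : ℝ → ℝ) (hneg : ∀ a : ℝ, 0 < a → m a < 0)
    (hsub : ∀ b : ℝ, 0 < b → ∀ θ : ℝ, 1 < θ → m (θ * b) ≤ θ ^ 2 * m b)
    (a b : ℝ) (hb : 0 < b) (hba : b < a) :
    m a ≤ m b + m (Real.sqrt (a ^ 2 - b ^ 2)) ∧
      ((m (a / b * b) < (a / b) ^ 2 * m b ∨
          m (a / Real.sqrt (a ^ 2 - b ^ 2) * Real.sqrt (a ^ 2 - b ^ 2)) <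
            (a / Real.sqrt (a ^ 2 - b ^ 2)) ^ 2 * m (Real.sqrt (a ^ 2 - b ^ 2))) →
        m a < m b + m (Real.sqrt (a ^ 2 - b ^ 2))) := by
  have ha : 0 < a := hb.trans hba
  set c := Real.sqrt (a ^ 2 - b ^ 2) with hc
  have hsq : a ^ 2 - b ^ 2 > 0 := by nlinarith
  have hcpos : 0 < c := Real.sqrt_pos.mpr hsq
  have hc2 : c ^ 2 = a ^ 2 - b ^ 2 := Real.sq_sqrt hsq.le
  have hca : c < a := by nlinarith
  have hθb : 1 < a / b := (one_lt_div hb).mpr hba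
  have hθc : 1 < a / c := (one_lt_div hcpos).mpr hca
  have hab : a / b * b = a := div_mul_cancel₀ a hb.ne'
  have hac : a / c * c = a := div_mul_cancel₀ a hcpos.ne'
  have h1 := hsub b hb (a / b) hθb
  have h2 := hsub c hcpos (a / c) hθc
  rw [hab] at h1
  rw [hac] at h2
  have key : ∀ x y : ℝ, m a ≤ x → m a ≤ y →
      b ^ 2 * m a ≤ b ^ 2 * x → c ^ 2 * m a ≤ c ^ 2 * y → True := fun _ _ _ _ _ _ => trivial
  have e1 : b ^ 2 * m a ≤ a ^ 2 * m b := by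
    have := mul_le_mul_of_nonneg_left h1 (sq_nonneg b)
    calc b ^ 2 * m a ≤ b ^ 2 * ((a / b) ^ 2 * m b) := this
      _ = a ^ 2 * m b := by field_simp
  have e2 : c ^ 2 * m a ≤ a ^ 2 * m c := by
    have := mul_le_mul_of_nonneg_left h2 (sq_nonneg c)
    calc c ^ 2 * m a ≤ c ^ 2 * ((a / c) ^ 2 * m c) := this
      _ = a ^ 2 * m c := by field_simp
  have ha2 : 0 < a ^ 2 := by positivity
  rw [hc2] at e2
  have hring : b ^ 2 * m a + (a ^ 2 - b ^ 2) * m a = a ^ 2 * m a := by ring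
  constructor
  · have esum : a ^ 2 * m a ≤ a ^ 2 * (m b + m c) := by
      rw [← hring, mul_add]; linarith
    exact (mul_le_mul_iff_right₀ ha2).mp esum
  · rintro (hs | hs)
    · rw [hab] at hs
      have e1' : b ^ 2 * m a < a ^ 2 * m b := by
        have := mul_lt_mul_of_pos_left hs (by positivity : (0:ℝ) < b ^ 2)
        calc b ^ 2 * m a < b ^ 2 * ((a / b) ^ 2 * m b) := this
          _ = a ^ 2 * m b := by field_simp
      have esum : a ^ 2 * m a < a ^ 2 * (m b + m c) := by
        rw [← hring, mul_add]; linarith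
      exact (mul_lt_mul_iff_right₀ ha2).mp esum
    · rw [hac] at hs
      have e2' : (a ^ 2 - b ^ 2) * m a < a ^ 2 * m c := by
        have := mul_lt_mul_of_pos_left hs (by positivity : (0:ℝ) < c ^ 2)
        rw [← hc2]
        calc c ^ 2 * m a < c ^ 2 * ((a / c) ^ 2 * m c) := this
          _ = a ^ 2 * m c := by field_simp
      have esum : a ^ 2 * m a < a ^ 2 * (m b + m c) := by
        rw [← hring, mul_add]; linarith
      exact (mul_lt_mul_iff_right₀ ha2).mp esum
end
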